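/- Suppose q < 1/2 and p(0) < 1, and let 0 ≤ h ≤ N−2. If p_{h+2} > p_{h+1} then p_h > p_{h+1}, and if p_{h+2} < p_{h+1} then p_h < p_{h+1}. -/

import Mathlib

/-!
Write `F = G ∘ g` with `G t = ∑ tᵏ p(k)` the generating function of `p` and
`g x = q x + (1 - q)(1 - x)`. Both map `[0,1]` into itself; `G` is strictly increasing there because
`p(0) < 1` puts mass on some `k ≥ 1`, and `g` is strictly decreasing because `q < 1/2`. So `F` is
strictly decreasing on `[0,1]`, where all `p_h` lie, and applying it to `p_{h+2} ≷ p_{h+1}` reverses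
the inequality into `p_{h+1} ≶ p_h`.
-/

open Set

noncomputable def pgf (p : ℕ → ℝ) (t : ℝ) : ℝ := ∑' k, t ^ k * p k

section pgf

variable {p : ℕ → ℝ}

theorem pow_mul_le_of_mem_Icc (hp : ∀ k, 0 ≤ p k) {t : ℝ} (ht : t ∈ Icc (0 : ℝ) 1) (k : ℕ) :
    t ^ k * p k ≤ p k :=
  mul_le_of_le_one_left (hp k) (pow_le_one₀ ht.1 ht.2)

theorem summable_pow_mul_of_mem_Icc (hp : ∀ k, 0 ≤ p k) (hsum : Summable p) {t : ℝ}
    (ht : t ∈ Icc (0 : ℝ) 1) : Summable fun k ↦ t ^ k * p k :=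
  hsum.of_nonneg_of_le (fun k ↦ mul_nonneg (pow_nonneg ht.1 k) (hp k))
    (pow_mul_le_of_mem_Icc hp ht)

theorem pgf_mem_Icc (hp : ∀ k, 0 ≤ p k) (hpsum : HasSum p 1) {t : ℝ} (ht : t ∈ Icc (0 : ℝ) 1) :
    pgf p t ∈ Icc (0 : ℝ) 1 := by
  refine ⟨tsum_nonneg fun k ↦ mul_nonneg (pow_nonneg ht.1 k) (hp k), ?_⟩
  calc pgf p t ≤ ∑' k, p k :=
        (summable_pow_mul_of_mem_Icc hp hpsum.summable ht).tsum_le_tsum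
          (pow_mul_le_of_mem_Icc hp ht) hpsum.summable
    _ = 1 := hpsum.tsum_eq

theorem exists_pos_of_hasSum_one_of_lt_one (hp : ∀ k, 0 ≤ p k) (hpsum : HasSum p 1)
    (hp0 : p 0 < 1) : ∃ k, k ≠ 0 ∧ 0 < p k := by
  by_contra! hzero
  have : ∑' k, p k = p 0 :=
    tsum_eq_single 0 fun k hk ↦ le_antisymm (hzero k hk) (hp k)
  linarith [hpsum.tsum_eq]

theorem strictMonoOn_pgf (hp : ∀ k, 0 ≤ p k) (hpsum : HasSum p 1) (hp0 : p 0 < 1) :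
    StrictMonoOn (pgf p) (Icc 0 1) := by
  intro s hs t ht hst
  obtain ⟨k, hk, hpk⟩ := exists_pos_of_hasSum_one_of_lt_one hp hpsum hp0
  exact Summable.tsum_lt_tsum (i := k)
    (fun j ↦ mul_le_mul_of_nonneg_right (pow_le_pow_left₀ hs.1 hst.le j) (hp j))
    (mul_lt_mul_of_pos_right (pow_lt_pow_left₀ hst hs.1 hk) hpk)
    (summable_pow_mul_of_mem_Icc hp hpsum.summable hs)
    (summable_pow_mul_of_mem_Icc hp hpsum.summable ht)

end pgf

theorem mix_mem_Icc {q x : ℝ} (hq : q ∈ Icc (0 : ℝ) 1) (hx : x ∈ Icc (0 : ℝ) 1) :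
    q * x + (1 - q) * (1 - x) ∈ Icc (0 : ℝ) 1 := by
  obtain ⟨hq0, hq1⟩ := hq
  obtain ⟨hx0, hx1⟩ := hx
  constructor <;> nlinarith

theorem strictAnti_mix {q : ℝ} (hq : q < 1 / 2) :
    StrictAnti fun x : ℝ ↦ q * x + (1 - q) * (1 - x) := by
  intro x y hxy
  nlinarith

theorem mem_of_backward_recursion {α : Type*} {f : α → α} {s : Set α} (hf : MapsTo f s s)
    {N : ℕ} {P : ℕ → α} (hPN : P N ∈ s) (hPrec : ∀ h, h < N → P h = f (P (h + 1))) :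
    ∀ i ≤ N, P i ∈ s := fun _ ↦
  Nat.decreasingInduction (fun k hk hmem ↦ hPrec k hk ▸ hf hmem) hPN

theorem StrictAntiOn.orbit_alternates {α : Type*} [LinearOrder α] {f : α → α} {s : Set α}
    (hf : StrictAntiOn f s) {a b c : α} (hb : b ∈ s) (hc : c ∈ s) (hab : a = f b)
    (hbc : b = f c) : (c > b → a > b) ∧ (c < b → a < b) := by
  subst hab hbc
  exact ⟨fun h ↦ hf hb hc h, fun h ↦ hf hc hb h⟩

theorem stmt_8_general (q : ℝ) (hq0 : 0 ≤ q) (hq1 : q ≤ 1)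
    (p : ℕ → ℝ) (hp : ∀ k, 0 ≤ p k) (hpsum : HasSum p 1)
    (F : ℝ → ℝ)
    (hF : ∀ x : ℝ, F x = ∑' k : ℕ, (q * x + (1 - q) * (1 - x)) ^ k * p k)
    (N : ℕ)
    (P : ℕ → ℝ) (hPN : P N = 1) (hPrec : ∀ h, h < N → P h = F (P (h + 1)))
    (hq : q < 1 / 2) (hp0 : p 0 < 1)
    (h : ℕ) (hh : h + 2 ≤ N) :
    (P (h + 2) > P (h + 1) → P h > P (h + 1)) ∧
    (P (h + 2) < P (h + 1) → P h < P (h + 1)) := by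
  have hFeq : F = pgf p ∘ fun x ↦ q * x + (1 - q) * (1 - x) := funext hF
  have hmaps : MapsTo F (Icc 0 1) (Icc 0 1) := fun x hx ↦ by
    rw [hFeq]
    exact pgf_mem_Icc hp hpsum (mix_mem_Icc ⟨hq0, hq1⟩ hx)
  have hanti : StrictAntiOn F (Icc 0 1) := by
    rw [hFeq]
    exact (strictMonoOn_pgf hp hpsum hp0).comp_strictAntiOn
      ((strictAnti_mix hq).strictAntiOn _) fun x hx ↦ mix_mem_Icc ⟨hq0, hq1⟩ hx
  have hmem := mem_of_backward_recursion hmaps (by simp [hPN]) hPrec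
  exact hanti.orbit_alternates (hmem _ (by omega)) (hmem _ hh)
    (hPrec h (by omega)) (hPrec (h + 1) (by omega))

theorem stmt_8 (q : ℝ) (hq0 : 0 ≤ q) (hq1 : q ≤ 1)
    (p : ℕ → ℝ) (hp : ∀ k, 0 ≤ p k) (hpsum : HasSum p 1)
    (F : ℝ → ℝ)
    (hF : ∀ x : ℝ, F x = ∑' k : ℕ, (q * x + (1 - q) * (1 - x)) ^ k * p k)
    (N : ℕ) (hN : 1 ≤ N)
    (P : ℕ → ℝ) (hPN : P N = 1) (hPrec : ∀ h, h < N → P h = F (P (h + 1)))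
    (hq : q < 1 / 2) (hp0 : p 0 < 1)
    (h : ℕ) (hh : h + 2 ≤ N) :
    (P (h + 2) > P (h + 1) → P h > P (h + 1)) ∧
    (P (h + 2) < P (h + 1) → P h < P (h + 1)) :=
  stmt_8_general q hq0 hq1 p hp hpsum F hF N P hPN hPrec hq hp0 h hh
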